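/- For every k ≥ 1, the number of admissible mesa sets M ⊆ [3k−1] with |M| = 2k−1 equals the rational Catalan number C_{2k−1,k} = (1/k)·binom(3k−2, 2k−1). -/

import Mathlib

/-- `w` (read on positions `1,…,2n`) is a Stirling permutation of order `n`:
each value `1,…,n` appears exactly twice, all letters lie in `[1,n]`, and every
value between the two copies of a value exceeds it. -/
def IsStirling (n : ℕ) (w : ℕ → ℕ) : Prop :=
  (∀ k, 1 ≤ k → k ≤ n → ((Finset.Icc 1 (2*n)).filter (fun i => w i = k)).card = 2) ∧
  (∀ i, 1 ≤ i → i ≤ 2*n → 1 ≤ w i ∧ w i ≤ n) ∧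
  (∀ i j l, 1 ≤ i → i < j → j < l → l ≤ 2*n → w i = w l → w i < w j)

/-- The set of mesas of `w`: values `m` with `w(i-1) < w(i) = w(i+1) = m > w(i+2)`
for some `2 ≤ i ≤ 2n-2`. -/
def MesaSet (n : ℕ) (w : ℕ → ℕ) : Set ℕ :=
  {m | ∃ i, 2 ≤ i ∧ i + 2 ≤ 2*n ∧ w (i-1) < w i ∧ w i = w (i+1) ∧ w (i+2) < w i ∧ w i = m}

/-- The collection of admissible mesa sets of order `n`. -/
def AMS (n : ℕ) : Set (Set ℕ) := {M | ∃ w, IsStirling n w ∧ MesaSet n w = M}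

/-!
A finite set `F ⊆ [1, n]` is the mesa set of a Stirling permutation of order `n` iff
`3 · #(F ∩ [1, x]) < 2x` for every `x ∈ [1, n]`. Necessity: if `p` mesas are `≤ x`, each of them,
at position `i`, makes the letters at `i, i+1, i+2` at most `x`, and so is the letter just before
the first of them; these `3p + 1` positions are among the `2x` positions carrying letters `≤ x`.
Sufficiency (for `n = 3k - 1`, `#F = 2k - 1`): interleave the plateaus `f f`, `f ∈ F`, with the
complement, each complement letter enclosing one plateau; the bound at `x = f` leaves enough
complement letters below `f` to make `f` a mesa.

Reading `F - 1 ⊆ ℤ/(3k-1)` as the cyclic walk with step `-1` on `F - 1` and `+2` elsewhere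
(total height `1`), the condition says that all partial sums are positive. By the cycle lemma
exactly one of the `3k - 1` rotations of each `(2k-1)`-subset has this property, so there are
`binom(3k-1, 2k-1) / (3k-1) = binom(3k-2, 2k-1) / k` admissible sets.
-/

open Finset

/-- The paper asks `3 · #(F ∩ [1, x]) ≤ 2x - 1` only for `x ∈ F`; this is equivalent. -/
def IsAdmissible (n : ℕ) (F : Finset ℕ) : Prop :=
  F ⊆ Icc 1 n ∧ ∀ x ∈ Icc 1 n, 3 * #{y ∈ F | y ≤ x} < 2 * x

section CycleLemma

variable {a : ℕ → ℤ} {N r : ℕ}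

def StaysAboveFrom (a : ℕ → ℤ) (r : ℕ) : Prop :=
  ∀ j, 0 < j → ∑ i ∈ range r, a i < ∑ i ∈ range (r + j), a i

lemma staysAboveFrom_iff_zero_rotate :
    StaysAboveFrom a r ↔ StaysAboveFrom (fun i ↦ a (r + i)) 0 := by
  simp [StaysAboveFrom, sum_range_add]

lemma sum_range_period_add (ha : Function.Periodic a N) (j : ℕ) :
    ∑ i ∈ range (N + j), a i = ∑ i ∈ range N, a i + ∑ i ∈ range j, a i := by
  rw [sum_range_add]
  exact congrArg _ (sum_congr rfl fun i _ ↦ by rw [add_comm, ha])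

lemma pos_of_sum_range_eq_one (hsum : ∑ i ∈ range N, a i = 1) : 0 < N :=
  Nat.pos_of_ne_zero fun h0 ↦ by simp [h0] at hsum

variable (ha : Function.Periodic a N) (hsum : ∑ i ∈ range N, a i = 1)
include ha hsum

lemma sum_range_eq_sum_range_mod_add_div (j : ℕ) :
    ∑ i ∈ range j, a i = ∑ i ∈ range (j % N), a i + (j / N : ℕ) := by
  have hN := pos_of_sum_range_eq_one hsum
  induction j using Nat.strong_induction_on with
  | _ j ih =>
    rcases lt_or_ge j N with hj | hj
    · simp [Nat.mod_eq_of_lt hj, Nat.div_eq_of_lt hj]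
    · obtain ⟨j, rfl⟩ := Nat.exists_eq_add_of_le hj
      rw [sum_range_period_add ha, hsum, ih j (by omega), Nat.add_mod_left,
        Nat.add_div_left _ hN]
      push_cast; ring

lemma staysAboveFrom_zero_iff :
    StaysAboveFrom a 0 ↔ ∀ j ∈ Icc 1 N, 0 < ∑ i ∈ range j, a i := by
  refine ⟨fun h j hj ↦ by simpa using h j (mem_Icc.1 hj).1, fun h j hj ↦ ?_⟩
  rw [zero_add, sum_range_zero, sum_range_eq_sum_range_mod_add_div ha hsum]
  have hN := pos_of_sum_range_eq_one hsum
  rcases Nat.eq_zero_or_pos (j % N) with hj0 | hj0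
  · rw [hj0, sum_range_zero, zero_add, Nat.cast_pos]
    exact Nat.div_pos (Nat.le_of_dvd hj (Nat.dvd_of_mod_eq_zero hj0)) hN
  · exact add_pos_of_pos_of_nonneg (h _ (mem_Icc.2 ⟨hj0, (Nat.mod_lt j hN).le⟩)) (Nat.cast_nonneg _)

theorem exists_staysAboveFrom : ∃ r < N, StaysAboveFrom a r := by
  have hN := pos_of_sum_range_eq_one hsum
  set S : ℕ → ℤ := fun j ↦ ∑ i ∈ range j, a i
  obtain ⟨r₀, hr₀, hmin⟩ := (range N).exists_min_image S ⟨0, by simpa⟩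
  -- `r` is the last minimum of the partial sums over one period
  obtain ⟨r, hr, hlast⟩ := ({j ∈ range N | ∀ i < N, S j ≤ S i}).exists_max_image id
    ⟨r₀, by simpa using ⟨mem_range.1 hr₀, fun i hi ↦ hmin i (by simpa)⟩⟩
  simp only [mem_filter, mem_range, id] at hr hlast
  refine ⟨r, hr.1, fun j hj ↦ ?_⟩
  by_cases hjN : r + j < N
  · refine lt_of_le_of_ne (hr.2 _ hjN) fun heq ↦ ?_
    have := hlast (r + j) ⟨hjN, fun i hi ↦ heq.symm.trans_le (hr.2 i hi)⟩
    omega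
  · have hmod := hr.2 ((r + j) % N) (Nat.mod_lt _ hN)
    have hdiv : 1 ≤ (r + j) / N := (Nat.one_le_div_iff hN).2 (by omega)
    simp only [S, sum_range_eq_sum_range_mod_add_div ha hsum (r + j)] at hmod ⊢
    omega

theorem staysAboveFrom_unique {r r' : ℕ} (hr : r < N) (hr' : r' < N)
    (h : StaysAboveFrom a r) (h' : StaysAboveFrom a r') : r = r' := by
  wlog hlt : r < r' generalizing r r'
  · obtain hlt | rfl := (not_lt.1 hlt).lt_or_eq
    exacts [(this hr' hr h' h hlt).symm, rfl]
  have h₁ := h (r' - r) (by omega)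
  have h₂ := h' (r + N - r') (by omega)
  rw [show r + (r' - r) = r' by omega] at h₁
  rw [show r' + (r + N - r') = N + r by omega, sum_range_period_add ha, hsum] at h₂
  omega

end CycleLemma

section CyclicSteps

variable {N : ℕ} {D : Finset (ZMod N)}

def cyclicSteps (D : Finset (ZMod N)) (i : ℕ) : ℤ := if (i : ZMod N) ∈ D then -1 else 2

lemma cyclicSteps_periodic : Function.Periodic (cyclicSteps D) N := fun i ↦ by simp [cyclicSteps]

lemma sum_range_cyclicSteps (j : ℕ) :
    ∑ i ∈ range j, cyclicSteps D i = 2 * j - 3 * #{i ∈ range j | ((i : ℕ) : ZMod N) ∈ D} := by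
  have h (i : ℕ) : cyclicSteps D i = 2 - 3 * if (i : ZMod N) ∈ D then 1 else 0 := by
    unfold cyclicSteps; split_ifs <;> norm_num
  simp only [h, sum_sub_distrib, ← mul_sum, sum_boole, sum_const, card_range, nsmul_eq_mul]
  ring

lemma cyclicSteps_map_subRight (r : ℕ) :
    cyclicSteps (D.map (Equiv.subRight (r : ZMod N)).toEmbedding) = fun i ↦ cyclicSteps D (r + i) := by
  ext i
  simp [cyclicSteps, mem_map_equiv, add_comm]

variable [NeZero N]

lemma card_filter_range_natCast_mem {x : ℕ} (hx : x ≤ N) :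
    #{i ∈ range x | ((i : ℕ) : ZMod N) ∈ D} = #{z ∈ D | z.val < x} := by
  refine card_nbij' (fun i ↦ (i : ZMod N)) ZMod.val (fun i hi ↦ ?_) (fun z hz ↦ ?_)
    (fun i hi ↦ ZMod.val_cast_of_lt ?_) (fun z _ ↦ ZMod.natCast_zmod_val z)
  · simp only [coe_filter, mem_range, Set.mem_ofPred_eq] at hi ⊢
    exact ⟨hi.2, by rw [ZMod.val_cast_of_lt (by omega)]; exact hi.1⟩
  · simp only [coe_filter, mem_range, Set.mem_ofPred_eq, ZMod.natCast_zmod_val] at hz ⊢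
    exact hz.symm
  · simp only [coe_filter, mem_range, Set.mem_ofPred_eq] at hi
    omega

lemma sum_range_cyclicSteps_eq_one (hND : 2 * N = 3 * #D + 1) :
    ∑ i ∈ range N, cyclicSteps D i = 1 := by
  rw [sum_range_cyclicSteps, card_filter_range_natCast_mem le_rfl]
  simp only [ZMod.val_lt, filter_true]
  omega

theorem mul_ncard_staysAboveFrom_cyclicSteps {K : ℕ} (hNK : 2 * N = 3 * K + 1) :
    N * {D : Finset (ZMod N) | #D = K ∧ StaysAboveFrom (cyclicSteps D) 0}.ncard = N.choose K := by
  classical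
  set S := powersetCard K (univ : Finset (ZMod N))
  have hS : {D : Finset (ZMod N) | #D = K ∧ StaysAboveFrom (cyclicSteps D) 0} =
      ↑{D ∈ S | StaysAboveFrom (cyclicSteps D) 0} := by
    ext; simp [S]
  rw [hS, Set.ncard_coe_finset]
  -- double count the pairs `(D, r)` with `StaysAboveFrom (cyclicSteps D) r`: each `D` has
  -- exactly one such `r < N`, and rotating by `r` matches the `D`s of `r` with those of `0`
  have key := card_mul_eq_card_mul (fun D r ↦ StaysAboveFrom (cyclicSteps D) r) (s := S)
    (t := range N) (m := 1) (n := #{D ∈ S | StaysAboveFrom (cyclicSteps D) 0}) ?_ ?_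
  · rwa [card_powersetCard, card_univ, ZMod.card, card_range, mul_one, eq_comm] at key
  · intro D hD
    rw [mem_powersetCard_univ] at hD
    have hsum := sum_range_cyclicSteps_eq_one (hD ▸ hNK)
    obtain ⟨r, hr, hgood⟩ := exists_staysAboveFrom cyclicSteps_periodic hsum
    refine card_eq_one.2 ⟨r, eq_singleton_iff_unique_mem.2 ⟨by simp [hr, hgood], fun r' hr' ↦ ?_⟩⟩
    simp only [mem_bipartiteAbove, mem_range] at hr'
    exact staysAboveFrom_unique cyclicSteps_periodic hsum hr'.1 hr hr'.2 hgood
  · intro r _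
    refine card_equiv (Equiv.finsetCongr (Equiv.subRight (r : ZMod N))) fun D ↦ ?_
    simp [bipartiteBelow, S, staysAboveFrom_iff_zero_rotate (r := r), cyclicSteps_map_subRight]

def valSuccEmbedding (N : ℕ) [NeZero N] : ZMod N ↪ ℕ :=
  ⟨fun z ↦ z.val + 1, fun _ _ h ↦ ZMod.val_injective N (Nat.succ_injective h)⟩

@[simp]
lemma valSuccEmbedding_apply (z : ZMod N) : valSuccEmbedding N z = z.val + 1 := rfl

lemma map_valSuccEmbedding_subset (D : Finset (ZMod N)) :
    D.map (valSuccEmbedding N) ⊆ Icc 1 N := by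
  intro y hy
  obtain ⟨z, -, rfl⟩ := mem_map.1 hy
  exact mem_Icc.2 ⟨Nat.le_add_left 1 _, ZMod.val_lt z⟩

lemma card_filter_map_valSuccEmbedding_le (x : ℕ) :
    #{y ∈ D.map (valSuccEmbedding N) | y ≤ x} = #{z ∈ D | z.val < x} := by
  rw [filter_map, card_map]
  rfl

lemma staysAboveFrom_cyclicSteps_iff (hND : 2 * N = 3 * #D + 1) :
    StaysAboveFrom (cyclicSteps D) 0 ↔ IsAdmissible N (D.map (valSuccEmbedding N)) := by
  rw [staysAboveFrom_zero_iff cyclicSteps_periodic (sum_range_cyclicSteps_eq_one hND),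
    IsAdmissible, and_iff_right (map_valSuccEmbedding_subset D)]
  refine forall₂_congr fun x hx ↦ ?_
  rw [sum_range_cyclicSteps, card_filter_range_natCast_mem (mem_Icc.1 hx).2,
    card_filter_map_valSuccEmbedding_le]
  omega

lemma exists_map_valSuccEmbedding_eq {F : Finset ℕ} (hF : F ⊆ Icc 1 N) :
    ∃ D : Finset (ZMod N), D.map (valSuccEmbedding N) = F := by
  refine ⟨univ.filter fun z ↦ z.val + 1 ∈ F, ext fun y ↦ ⟨fun hy ↦ ?_, fun hy ↦ ?_⟩⟩
  · obtain ⟨z, hz, rfl⟩ := mem_map.1 hy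
    exact (mem_filter.1 hz).2
  · have := mem_Icc.1 (hF hy)
    refine mem_map.2 ⟨((y - 1 : ℕ) : ZMod N), ?_, ?_⟩ <;>
      simp [ZMod.val_cast_of_lt (show y - 1 < N by omega), Nat.sub_add_cancel this.1, hy]

lemma image_map_valSuccEmbedding {K : ℕ} (hNK : 2 * N = 3 * K + 1) :
    (fun D : Finset (ZMod N) ↦ D.map (valSuccEmbedding N)) ''
        {D | #D = K ∧ StaysAboveFrom (cyclicSteps D) 0} = {F | IsAdmissible N F ∧ #F = K} := by
  ext F
  simp only [Set.mem_image, Set.mem_ofPred_eq]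
  constructor
  · rintro ⟨D, ⟨rfl, hD⟩, rfl⟩
    exact ⟨(staysAboveFrom_cyclicSteps_iff hNK).1 hD, card_map _⟩
  · rintro ⟨hF, rfl⟩
    obtain ⟨D, rfl⟩ := exists_map_valSuccEmbedding_eq hF.1
    rw [card_map] at hNK ⊢
    exact ⟨D, ⟨rfl, (staysAboveFrom_cyclicSteps_iff hNK).2 hF⟩, rfl⟩

end CyclicSteps

section MesaPositions

variable {n : ℕ} {w : ℕ → ℕ} {i i' x : ℕ}

def mesaPositions (n : ℕ) (w : ℕ → ℕ) : Finset ℕ :=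
  {i ∈ Icc 2 (2 * n - 2) | w (i - 1) < w i ∧ w i = w (i + 1) ∧ w (i + 2) < w i}

lemma mem_mesaPositions : i ∈ mesaPositions n w ↔
    2 ≤ i ∧ i + 2 ≤ 2 * n ∧ w (i - 1) < w i ∧ w i = w (i + 1) ∧ w (i + 2) < w i := by
  simp only [mesaPositions, mem_filter, mem_Icc]
  omega

lemma mesaSet_eq_image : MesaSet n w = ↑((mesaPositions n w).image w) := by
  ext v
  simp [MesaSet, mem_mesaPositions, and_assoc]

lemma add_three_le_of_mem_mesaPositions (hi : i ∈ mesaPositions n w)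
    (hi' : i' ∈ mesaPositions n w) (hlt : i < i') : i + 3 ≤ i' := by
  rw [mem_mesaPositions] at hi hi'
  by_contra! h
  obtain rfl | rfl : i' = i + 1 ∨ i' = i + 2 := by omega
  · simp only [Nat.add_sub_cancel] at hi'
    omega
  · simp only [show i + 2 - 1 = i + 1 by omega] at hi'
    omega

lemma card_biUnion_Icc_mesaPositions {P : Finset ℕ} (hP : P ⊆ mesaPositions n w) :
    #(P.biUnion fun i ↦ Icc i (i + 2)) = 3 * #P := by
  rw [card_biUnion, sum_const_nat (m := 3) fun i _ ↦ by rw [Nat.card_Icc]; omega, mul_comm]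
  intro i hi i' hi' hne
  refine disjoint_left.2 fun j hj hj' ↦ ?_
  rw [mem_Icc] at hj hj'
  rcases lt_or_gt_of_ne hne with hlt | hlt
  · have := add_three_le_of_mem_mesaPositions (hP hi) (hP hi') hlt
    omega
  · have := add_three_le_of_mem_mesaPositions (hP hi') (hP hi) hlt
    omega

lemma IsStirling.injOn_mesaPositions (hw : IsStirling n w) : Set.InjOn w (mesaPositions n w) := by
  suffices ∀ i ∈ mesaPositions n w, ∀ i' ∈ mesaPositions n w, i < i' → w i ≠ w i' by
    intro i hi i' hi' h
    by_contra hne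
    rcases lt_or_gt_of_ne hne with hlt | hlt
    exacts [this i hi i' hi' hlt h, this i' hi' i hi hlt h.symm]
  intro i hi i' hi' hlt h
  have h3 := add_three_le_of_mem_mesaPositions hi hi' hlt
  rw [mem_mesaPositions] at hi hi'
  -- the copy of `w i` at `i + 1` lies between the copies at `i` and `i'`
  have := hw.2.2 i (i + 1) i' (by omega) (by omega) (by omega) (by omega) h
  omega

lemma IsStirling.card_filter_le_le (hw : IsStirling n w) (x : ℕ) :
    #{i ∈ Icc 1 (2 * n) | w i ≤ x} ≤ 2 * x := by
  set A := {i ∈ Icc 1 (2 * n) | w i ≤ x}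
  calc #A ≤ 2 * #(A.image w) := card_le_mul_card_image A 2 fun v hv ↦ ?_
    _ ≤ 2 * #(Icc 1 x) := by
        gcongr
        intro v hv
        obtain ⟨i, hi, rfl⟩ := mem_image.1 hv
        simp only [A, mem_filter, mem_Icc] at hi ⊢
        exact ⟨(hw.2.1 i hi.1.1 hi.1.2).1, hi.2⟩
    _ = 2 * x := by rw [Nat.card_Icc, Nat.add_sub_cancel]
  obtain ⟨i, hi, rfl⟩ := mem_image.1 hv
  simp only [A, mem_filter, mem_Icc] at hi
  have hv := hw.2.1 i hi.1.1 hi.1.2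
  calc #{j ∈ A | w j = w i} ≤ #{j ∈ Icc 1 (2 * n) | w j = w i} :=
        card_le_card fun j hj ↦ by simp only [A, mem_filter] at hj ⊢; exact ⟨hj.1.1, hj.2⟩
    _ = 2 := hw.1 _ hv.1 hv.2

lemma IsStirling.three_mul_card_mesaPositions_lt (hw : IsStirling n w) (hx : 1 ≤ x) :
    3 * #{i ∈ mesaPositions n w | w i ≤ x} < 2 * x := by
  set P := {i ∈ mesaPositions n w | w i ≤ x}
  rcases P.eq_empty_or_nonempty with hP | hP
  · rw [hP, card_empty]
    omega
  have hmem (i : ℕ) (hi : i ∈ P) : i ∈ mesaPositions n w ∧ w i ≤ x := mem_filter.1 hi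
  set U := P.biUnion fun i ↦ Icc i (i + 2)
  obtain ⟨i₀, hi₀P, hi₀min⟩ : ∃ i₀ ∈ P, ∀ i ∈ P, i₀ ≤ i := ⟨P.min' hP, P.min'_mem hP, P.min'_le⟩
  have hi₀ := hmem i₀ hi₀P
  rw [mem_mesaPositions] at hi₀
  have hnot : i₀ - 1 ∉ U := by
    simp only [U, mem_biUnion, mem_Icc, not_exists, not_and]
    intro i hi _
    have := hi₀min i hi
    omega
  have hsub : insert (i₀ - 1) U ⊆ {i ∈ Icc 1 (2 * n) | w i ≤ x} := by
    intro j hj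
    simp only [mem_insert, U, mem_biUnion, mem_Icc, mem_filter] at hj ⊢
    rcases hj with rfl | ⟨i, hi, hij⟩
    · omega
    · have hi' := hmem i hi
      rw [mem_mesaPositions] at hi'
      obtain rfl | rfl | rfl : j = i ∨ j = i + 1 ∨ j = i + 2 := by omega
      all_goals omega
  have := (card_le_card hsub).trans (hw.card_filter_le_le x)
  rw [card_insert_of_notMem hnot, card_biUnion_Icc_mesaPositions (P := P) (filter_subset _ _)] at this
  omega

end MesaPositions

theorem IsStirling.isAdmissible_image_mesaPositions {n : ℕ} {w : ℕ → ℕ} (hw : IsStirling n w) :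
    IsAdmissible n ((mesaPositions n w).image w) := by
  refine ⟨fun v hv ↦ ?_, fun x hx ↦ ?_⟩
  · obtain ⟨i, hi, rfl⟩ := mem_image.1 hv
    rw [mem_mesaPositions] at hi
    exact mem_Icc.2 (hw.2.1 i (by omega) (by omega))
  · rw [filter_image, card_image_of_injOn (hw.injOn_mesaPositions.mono (filter_subset _ _))]
    exact hw.three_mul_card_mesaPositions_lt (mem_Icc.1 hx).1

section Enumeration

variable {F : Finset ℕ} {t : ℕ}

lemma finite_ofPred_mem (F : Finset ℕ) : (Set.ofPred (· ∈ F)).Finite := F.finite_toSet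

lemma finite_ofPred_mem_toFinset (F : Finset ℕ) : (finite_ofPred_mem F).toFinset = F := by
  ext; simp

lemma nth_mem_finset (ht : t < #F) : Nat.nth (· ∈ F) t ∈ F :=
  Nat.nth_mem_of_lt_card (finite_ofPred_mem F) (by rwa [finite_ofPred_mem_toFinset])

lemma nth_finset_injOn : Set.InjOn (Nat.nth (· ∈ F)) (Set.Iio #F) := by
  simpa [finite_ofPred_mem_toFinset] using Nat.nth_injOn (finite_ofPred_mem F)

lemma count_nth_finset (ht : t < #F) : Nat.count (· ∈ F) (Nat.nth (· ∈ F) t) = t :=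
  Nat.count_nth_of_lt_card_finite (finite_ofPred_mem F) (by rwa [finite_ofPred_mem_toFinset])

lemma exists_nth_finset_eq {v : ℕ} (hv : v ∈ F) : ∃ t < #F, Nat.nth (· ∈ F) t = v := by
  simpa [finite_ofPred_mem_toFinset] using Nat.exists_lt_card_finite_nth_eq (finite_ofPred_mem F) hv

lemma card_filter_le_eq_count (x : ℕ) : #{y ∈ F | y ≤ x} = Nat.count (· ∈ F) (x + 1) := by
  rw [Nat.count_eq_card_filter_range]
  congr 1
  ext y
  simp [and_comm]

lemma infinite_ofPred_pos_notMem (F : Finset ℕ) : (Set.ofPred fun v ↦ 0 < v ∧ v ∉ F).Infinite :=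
  (Set.Ioi_infinite 0).sdiff F.finite_toSet

lemma count_pos_notMem_add_count (hF : 0 ∉ F) (x : ℕ) :
    Nat.count (fun v ↦ 0 < v ∧ v ∉ F) x + Nat.count (· ∈ F) x = x - 1 := by
  induction x with
  | zero => simp
  | succ x ih =>
    rw [Nat.count_succ, Nat.count_succ]
    split_ifs <;> grind

end Enumeration

lemma card_filter_eq_of_card_eq_mul {α β : Type*} [DecidableEq β] {s : Finset α}
    {u : Finset β} {f : α → β} {n : ℕ} (hf : ∀ a ∈ s, f a ∈ u) (hs : #s = n * #u)
    (hle : ∀ b ∈ u, #{a ∈ s | f a = b} ≤ n) {b : β} (hb : b ∈ u) : #{a ∈ s | f a = b} = n := by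
  rw [card_eq_sum_card_fiberwise hf, mul_comm, ← smul_eq_mul, ← sum_const] at hs
  exact (sum_eq_sum_iff_of_le hle).1 hs b hb

section Construction

variable {m : ℕ} {F : Finset ℕ} {i j l t : ℕ}

/-- The word `c₀ f₀ f₀ c₀ f₁ f₁ c₁ f₂ f₂ c₁ f₃ f₃ c₂ …` (positions counted from `1`), where
`f₀ < f₁ < ⋯` enumerate `F` and `c₀ < c₁ < ⋯` the positive integers outside `F`. -/
noncomputable def mesaWord (F : Finset ℕ) (i : ℕ) : ℕ :=
  if i % 3 = 1 then Nat.nth (fun v ↦ 0 < v ∧ v ∉ F) (i / 6) else Nat.nth (· ∈ F) ((i - 2) / 3)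

lemma mesaWord_of_mod_eq_one (hi : i % 3 = 1) :
    mesaWord F i = Nat.nth (fun v ↦ 0 < v ∧ v ∉ F) (i / 6) := if_pos hi

lemma mesaWord_of_mod_ne_one (hi : i % 3 ≠ 1) : mesaWord F i = Nat.nth (· ∈ F) ((i - 2) / 3) :=
  if_neg hi

lemma nth_pos_notMem (F : Finset ℕ) (j : ℕ) :
    0 < Nat.nth (fun v ↦ 0 < v ∧ v ∉ F) j ∧ Nat.nth (fun v ↦ 0 < v ∧ v ∉ F) j ∉ F :=
  Nat.nth_mem_of_infinite (infinite_ofPred_pos_notMem F) j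

/-- The admissibility bound at `x = f_t` leaves more than `(t + 1) / 2` complement letters below `f_t`. -/
lemma nth_pos_notMem_lt_nth (hF : IsAdmissible (3 * m + 2) F) (hcard : #F = 2 * m + 1)
    (ht : t < 2 * m + 1) (hj : 2 * j ≤ t + 1) :
    Nat.nth (fun v ↦ 0 < v ∧ v ∉ F) j < Nat.nth (· ∈ F) t := by
  set x := Nat.nth (· ∈ F) t
  have hxF : x ∈ F := nth_mem_finset (by omega)
  have hx := mem_Icc.1 (hF.1 hxF)
  have hbound := hF.2 x (hF.1 hxF)
  rw [card_filter_le_eq_count, Nat.count_succ, count_nth_finset (by omega), if_pos hxF] at hbound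
  have hsplit := count_pos_notMem_add_count (fun h ↦ by simpa using (mem_Icc.1 (hF.1 h)).1) x
  rw [count_nth_finset (by omega)] at hsplit
  exact Nat.nth_lt_of_lt_count (by omega)

lemma mesaWord_mem_Icc (hF : IsAdmissible (3 * m + 2) F) (hcard : #F = 2 * m + 1)
    (hi : i ∈ Icc 1 (2 * (3 * m + 2))) : mesaWord F i ∈ Icc 1 (3 * m + 2) := by
  rw [mem_Icc] at hi
  by_cases hi3 : i % 3 = 1
  · rw [mesaWord_of_mod_eq_one hi3]
    have hc := nth_pos_notMem_lt_nth hF hcard (j := i / 6) (t := 2 * m) (by omega) (by omega)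
    have hf := mem_Icc.1 (hF.1 (nth_mem_finset (F := F) (t := 2 * m) (by omega)))
    exact mem_Icc.2 ⟨(nth_pos_notMem F _).1, by omega⟩
  · rw [mesaWord_of_mod_ne_one hi3]
    exact hF.1 (nth_mem_finset (by omega))

lemma mesaWord_pair_of_eq (hcard : #F = 2 * m + 1) (hi : 1 ≤ i) (hil : i < l)
    (hl : l ≤ 2 * (3 * m + 2)) (h : mesaWord F i = mesaWord F l) :
    (i % 6 = 1 ∧ l = i + 3) ∨ (i % 3 = 2 ∧ l = i + 1) := by
  by_cases hi3 : i % 3 = 1 <;> by_cases hl3 : l % 3 = 1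
  · rw [mesaWord_of_mod_eq_one hi3, mesaWord_of_mod_eq_one hl3] at h
    have := Nat.nth_injective (infinite_ofPred_pos_notMem F) h
    omega
  · rw [mesaWord_of_mod_eq_one hi3, mesaWord_of_mod_ne_one hl3] at h
    exact absurd (h ▸ nth_mem_finset (by omega)) (nth_pos_notMem F _).2
  · rw [mesaWord_of_mod_ne_one hi3, mesaWord_of_mod_eq_one hl3] at h
    exact absurd (h ▸ nth_mem_finset (by omega)) (nth_pos_notMem F _).2
  · rw [mesaWord_of_mod_ne_one hi3, mesaWord_of_mod_ne_one hl3] at h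
    have := nth_finset_injOn (Set.mem_Iio.2 (by omega)) (Set.mem_Iio.2 (by omega)) h
    omega

lemma card_filter_mesaWord_eq_le_two (hcard : #F = 2 * m + 1) (v : ℕ) :
    #{i ∈ Icc 1 (2 * (3 * m + 2)) | mesaWord F i = v} ≤ 2 := by
  set s := {i ∈ Icc 1 (2 * (3 * m + 2)) | mesaWord F i = v}
  rcases s.eq_empty_or_nonempty with hs | hs
  · simp [hs]
  obtain ⟨a, has, hmin⟩ : ∃ a ∈ s, ∀ l ∈ s, a ≤ l := ⟨s.min' hs, s.min'_mem hs, s.min'_le⟩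
  have ha := mem_filter.1 has
  calc #s ≤ #({a, if a % 6 = 1 then a + 3 else a + 1} : Finset ℕ) := card_le_card fun l hl ↦ ?_
    _ ≤ 2 := card_le_two
  have hl' := mem_filter.1 hl
  rcases (hmin l hl).lt_or_eq with hlt | rfl
  · rw [mem_Icc] at ha hl'
    rcases mesaWord_pair_of_eq hcard ha.1.1 hlt hl'.1.2 (ha.2.trans hl'.2.symm) with
      ⟨h6, rfl⟩ | ⟨h3, rfl⟩
    · simp [h6]
    · simp [show a % 6 ≠ 1 by omega]
  · exact mem_insert_self _ _

theorem isStirling_mesaWord (hF : IsAdmissible (3 * m + 2) F) (hcard : #F = 2 * m + 1) :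
    IsStirling (3 * m + 2) (mesaWord F) := by
  refine ⟨fun v hv₁ hv₂ ↦ ?_, fun i hi₁ hi₂ ↦ mem_Icc.1 (mesaWord_mem_Icc hF hcard
    (mem_Icc.2 ⟨hi₁, hi₂⟩)), fun i j l hi hij hjl hl h ↦ ?_⟩
  · -- every letter occurs at most twice, and `2n` positions carry `n` letters
    exact card_filter_eq_of_card_eq_mul (fun i hi ↦ mesaWord_mem_Icc hF hcard hi)
      (by simp) (fun v _ ↦ card_filter_mesaWord_eq_le_two hcard v) (mem_Icc.2 ⟨hv₁, hv₂⟩)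
  rcases mesaWord_pair_of_eq hcard hi (hij.trans hjl) hl h with ⟨hi6, rfl⟩ | ⟨_, rfl⟩
  · rw [mesaWord_of_mod_eq_one (by omega), mesaWord_of_mod_ne_one (by omega)]
    exact nth_pos_notMem_lt_nth hF hcard (by omega) (by omega)
  · omega

theorem mesaSet_mesaWord (hF : IsAdmissible (3 * m + 2) F) (hcard : #F = 2 * m + 1) :
    MesaSet (3 * m + 2) (mesaWord F) = ↑F := by
  ext v
  simp only [MesaSet, Set.mem_ofPred_eq, mem_coe]
  constructor
  · rintro ⟨i, hi, hin, -, heq, -, rfl⟩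
    rcases mesaWord_pair_of_eq hcard (by omega) (Nat.lt_succ_self i) (by omega) heq with
      ⟨_, h⟩ | ⟨hi3, -⟩
    · omega
    · rw [mesaWord_of_mod_ne_one (by omega)]
      exact nth_mem_finset (by omega)
  · intro hv
    obtain ⟨t, ht, rfl⟩ := exists_nth_finset_eq hv
    have hmid (i : ℕ) (hi : i = 3 * t + 2 ∨ i = 3 * t + 3) : mesaWord F i = Nat.nth (· ∈ F) t := by
      rw [mesaWord_of_mod_ne_one (by omega)]
      congr 1
      omega
    have hside (i : ℕ) (hi : i = 3 * t + 1 ∨ i = 3 * t + 4) :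
        mesaWord F i < Nat.nth (· ∈ F) t := by
      rw [mesaWord_of_mod_eq_one (by omega)]
      exact nth_pos_notMem_lt_nth hF hcard (by omega) (by omega)
    refine ⟨3 * t + 2, by omega, by omega, ?_, ?_, ?_, hmid _ (by omega)⟩
    · rw [hmid (3 * t + 2) (by omega)]; exact hside _ (by omega)
    · rw [hmid (3 * t + 2) (by omega), hmid (3 * t + 2 + 1) (by omega)]
    · rw [hmid (3 * t + 2) (by omega)]; exact hside _ (by omega)

end Construction

theorem setOf_mem_AMS_ncard_eq (m : ℕ) :
    {M | M ∈ AMS (3 * m + 2) ∧ M.ncard = 2 * m + 1} =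
      (fun F : Finset ℕ ↦ (F : Set ℕ)) '' {F | IsAdmissible (3 * m + 2) F ∧ #F = 2 * m + 1} := by
  ext M
  constructor
  · rintro ⟨⟨w, hw, rfl⟩, hcard⟩
    rw [mesaSet_eq_image, Set.ncard_coe_finset] at hcard
    exact ⟨_, ⟨hw.isAdmissible_image_mesaPositions, hcard⟩, mesaSet_eq_image.symm⟩
  · rintro ⟨F, ⟨hF, hcard⟩, rfl⟩
    exact ⟨⟨mesaWord F, isStirling_mesaWord hF hcard, mesaSet_mesaWord hF hcard⟩,
      by rw [Set.ncard_coe_finset, hcard]⟩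

lemma succ_mul_choose_three_mul_add_two (m : ℕ) :
    (m + 1) * (3 * m + 2).choose (2 * m + 1) = (3 * m + 2) * (3 * m + 1).choose (2 * m + 1) := by
  rw [Nat.choose_symm_of_eq_add (show 3 * m + 2 = 2 * m + 1 + (m + 1) by ring),
    Nat.choose_symm_of_eq_add (show 3 * m + 1 = 2 * m + 1 + m by ring),
    Nat.add_one_mul_choose_eq (3 * m + 1) m, mul_comm]

theorem count_maximal_mesa_sets (k : ℕ) (hk : 1 ≤ k) :
    {M | M ∈ AMS (3*k-1) ∧ M.ncard = 2*k - 1}.ncard =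
      (3*k - 2).choose (2*k - 1) / k := by
  obtain ⟨m, rfl⟩ : ∃ m, k = m + 1 := ⟨k - 1, by omega⟩
  rw [show 3 * (m + 1) - 1 = 3 * m + 2 by omega, show 2 * (m + 1) - 1 = 2 * m + 1 by omega,
    show 3 * (m + 1) - 2 = 3 * m + 1 by omega]
  have : NeZero (3 * m + 2) := ⟨by omega⟩
  have hNK : 2 * (3 * m + 2) = 3 * (2 * m + 1) + 1 := by ring
  rw [setOf_mem_AMS_ncard_eq, ← image_map_valSuccEmbedding hNK, Set.image_image,
    Set.ncard_image_of_injective _ fun _ _ h ↦ map_injective _ (coe_injective h)]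
  set G := {D : Finset (ZMod (3 * m + 2)) | #D = 2 * m + 1 ∧ StaysAboveFrom (cyclicSteps D) 0}.ncard
  suffices G * (m + 1) = (3 * m + 1).choose (2 * m + 1) from
    (Nat.div_eq_of_eq_mul_left (by omega) this.symm).symm
  apply Nat.eq_of_mul_eq_mul_left (show 0 < 3 * m + 2 by omega)
  rw [← succ_mul_choose_three_mul_add_two, ← mul_ncard_staysAboveFrom_cyclicSteps hNK]
  ring
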